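/- arXiv:1812.01367 — 4 statements merged into one kernel-verified Lean document; each statement's English description precedes it below -/
import Mathlib

section
/- Let S and A be disjoint index sets and let X_{S∪A} = [X_S, X_A] be the concatenated matrix, assumed to have full column rank. Let M_S = I - X_S(X_S^T X_S)^{-1} X_S^T be the orthogonal projection onto the orthogonal complement of the column space of X_S, and similarly M_{S∪A}. Then for any Y ∈ ℝ^n, ||M_S Y||² - ||M_{S∪A} Y||² ≥ (Σ_{i∈A} (X_i^T M_S Y)²) / λ_max(X_A^T M_S X_A), where λ_max denotes the largest eigenvalue. -/
open Matrix

/-- Rayleigh-type bound: quadratic form of a Hermitian real matrix is bounded by the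
largest eigenvalue times the squared norm. -/
lemma aux_rayleigh {m : ℕ} {B : Matrix (Fin m) (Fin m) ℝ} (hB : B.IsHermitian) (v : Fin m → ℝ) :
    v ⬝ᵥ (B *ᵥ v) ≤ (⨆ i, hB.eigenvalues i) * (v ⬝ᵥ v) := by
  set U : Matrix (Fin m) (Fin m) ℝ := (hB.eigenvectorUnitary : Matrix (Fin m) (Fin m) ℝ) with hU
  have hstar : star U = Uᵀ := by
    rw [Matrix.star_eq_conjTranspose, conjTranspose_eq_transpose_of_trivial]
  set y : Fin m → ℝ := Uᵀ *ᵥ v with hy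
  have hUU : U * Uᵀ = 1 := by
    rw [← hstar]; exact (Matrix.mem_unitaryGroup_iff).mp hB.eigenvectorUnitary.2
  have hdiag : RCLike.ofReal ∘ hB.eigenvalues = hB.eigenvalues := by ext i; simp
  have h1 : v ⬝ᵥ (B *ᵥ v) = ∑ i, hB.eigenvalues i * y i ^ 2 := by
    nth_rewrite 1 [hB.spectral_theorem]
    rw [hdiag, Unitary.conjStarAlgAut_apply, hstar, ← mulVec_mulVec, ← mulVec_mulVec, dotProduct_mulVec, ← mulVec_transpose]
    rw [← hy, dotProduct]
    refine Finset.sum_congr rfl fun i _ => ?_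
    rw [mulVec_diagonal]; ring
  have h2 : v ⬝ᵥ v = ∑ i, y i ^ 2 := by
    have : y ⬝ᵥ y = v ⬝ᵥ v := by
      nth_rewrite 1 [hy]
      rw [mulVec_transpose, ← dotProduct_mulVec, mulVec_mulVec, hUU, one_mulVec]
    rw [← this, dotProduct]
    exact Finset.sum_congr rfl fun i _ => (sq (y i)).symm ▸ rfl
  rw [h1, h2, Finset.mul_sum]
  refine Finset.sum_le_sum fun i _ => ?_
  exact mul_le_mul_of_nonneg_right
    (le_ciSup (Set.Finite.bddAbove (Set.finite_range _)) i) (sq_nonneg _)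

/-- For a symmetric idempotent real matrix, `(P r)⬝(P r) = r ⬝ (P r)`. -/
lemma aux_proj_dot {n : Type*} [Fintype n] {P : Matrix n n ℝ} (hsym : Pᵀ = P)
    (hid : P * P = P) (r : n → ℝ) :
    (P *ᵥ r) ⬝ᵥ (P *ᵥ r) = r ⬝ᵥ (P *ᵥ r) := by
  nth_rewrite 1 [← vecMul_transpose]
  rw [← dotProduct_mulVec, mulVec_mulVec, hsym, hid]

lemma aux_dot_self_nonneg {n : Type*} [Fintype n] (v : n → ℝ) : 0 ≤ v ⬝ᵥ v :=
  Finset.sum_nonneg fun i _ => mul_self_nonneg _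

/-- Residual of least squares: for a symmetric idempotent `M` with `M * X = 0`,
`‖M Y‖² ≤ ‖Y - X β‖²` for every `β`. -/
lemma aux_min {n k : Type*} [Fintype n] [Fintype k] [DecidableEq n] {M : Matrix n n ℝ} {X : Matrix n k ℝ}
    (hsym : Mᵀ = M) (hid : M * M = M) (hMX : M * X = 0)
    (Y : n → ℝ) (β : k → ℝ) :
    (M *ᵥ Y) ⬝ᵥ (M *ᵥ Y) ≤ (Y - X *ᵥ β) ⬝ᵥ (Y - X *ᵥ β) := by
  set r : n → ℝ := Y - X *ᵥ β with hr
  have hMr : M *ᵥ Y = M *ᵥ r := by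
    rw [hr, mulVec_sub, mulVec_mulVec, hMX, zero_mulVec, sub_zero]
  have hQsym : (1 - M)ᵀ = 1 - M := by rw [transpose_sub, transpose_one, hsym]
  have hQid : (1 - M) * (1 - M) = 1 - M := by
    rw [sub_mul, mul_sub, mul_sub, hid]; simp
  have h1 := aux_proj_dot hsym hid r
  have h2 := aux_proj_dot hQsym hQid r
  have h3 : 0 ≤ ((1 - M) *ᵥ r) ⬝ᵥ ((1 - M) *ᵥ r) := aux_dot_self_nonneg _
  rw [h2, sub_mulVec, one_mulVec, dotProduct_sub] at h3
  rw [hMr, h1]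
  linarith

/-- Proposition 1 (RSS reduction lower bound): for disjoint sets S, A with
`[X_S, X_A]` of full column rank,
`‖M_S Y‖² - ‖M_{S∪A} Y‖² ≥ (∑_{i∈A} (X_iᵀ M_S Y)²) / λ_max(X_Aᵀ M_S X_A)`. -/
theorem stmt_0 {n s a : ℕ} (XS : Matrix (Fin n) (Fin s) ℝ) (XA : Matrix (Fin n) (Fin a) ℝ)
    (Y : Fin n → ℝ)
    (hS : IsUnit (XSᵀ * XS).det)
    (hfull : IsUnit ((fromCols XS XA)ᵀ * fromCols XS XA).det)
    (MS : Matrix (Fin n) (Fin n) ℝ) (hMS : MS = 1 - XS * (XSᵀ * XS)⁻¹ * XSᵀ)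
    (MSA : Matrix (Fin n) (Fin n) ℝ)
    (hMSA : MSA = 1 - fromCols XS XA * ((fromCols XS XA)ᵀ * fromCols XS XA)⁻¹ *
      (fromCols XS XA)ᵀ)
    (hB : (XAᵀ * MS * XA).IsHermitian) :
    (∑ i : Fin a, ((XAᵀ *ᵥ (MS *ᵥ Y)) i) ^ 2) / (⨆ i, hB.eigenvalues i)
      ≤ (MS *ᵥ Y) ⬝ᵥ (MS *ᵥ Y) - (MSA *ᵥ Y) ⬝ᵥ (MSA *ᵥ Y) := by
  set X : Matrix (Fin n) (Fin s ⊕ Fin a) ℝ := fromCols XS XA with hX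
  set u : Fin n → ℝ := MS *ᵥ Y with hu
  set z : Fin a → ℝ := XAᵀ *ᵥ u with hz
  set t : ℝ := ⨆ i, hB.eigenvalues i with ht
  -- symmetry of MS
  have hGsymm : ((XSᵀ * XS)⁻¹)ᵀ = (XSᵀ * XS)⁻¹ := by
    rw [transpose_nonsing_inv, transpose_mul, transpose_transpose]
  have hMSsym : MSᵀ = MS := by
    rw [hMS, transpose_sub, transpose_one, transpose_mul, transpose_mul, transpose_transpose,
      hGsymm, Matrix.mul_assoc]
  -- MS * XS = 0 and idempotence
  have hMSXS : MS * XS = 0 := by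
    rw [hMS, Matrix.sub_mul, Matrix.one_mul, Matrix.mul_assoc, Matrix.mul_assoc,
      nonsing_inv_mul _ hS, Matrix.mul_one, sub_self]
  have hMSid : MS * MS = MS := by
    nth_rewrite 2 [hMS]
    rw [mul_sub, mul_one, ← Matrix.mul_assoc, ← Matrix.mul_assoc, hMSXS, Matrix.zero_mul,
      Matrix.zero_mul, sub_zero]
  -- symmetry, MSA * X = 0, idempotence for MSA
  have hGXsymm : ((Xᵀ * X)⁻¹)ᵀ = (Xᵀ * X)⁻¹ := by
    rw [transpose_nonsing_inv, transpose_mul, transpose_transpose]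
  have hMSAsym : MSAᵀ = MSA := by
    rw [hMSA, transpose_sub, transpose_one, transpose_mul, transpose_mul, transpose_transpose,
      hGXsymm, Matrix.mul_assoc]
  have hMSAX : MSA * X = 0 := by
    rw [hMSA, Matrix.sub_mul, Matrix.one_mul, Matrix.mul_assoc, Matrix.mul_assoc,
      nonsing_inv_mul _ hfull, Matrix.mul_one, sub_self]
  have hMSAid : MSA * MSA = MSA := by
    nth_rewrite 2 [hMSA]
    rw [mul_sub, mul_one, ← Matrix.mul_assoc, ← Matrix.mul_assoc, hMSAX, Matrix.zero_mul,
      Matrix.zero_mul, sub_zero]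
  have hMSu : MS *ᵥ u = u := by rw [hu, mulVec_mulVec, hMSid]
  -- key: ‖MSA Y‖² ≤ ‖MS (Y - XA c)‖² for all c
  have key : ∀ c : Fin a → ℝ, (MSA *ᵥ Y) ⬝ᵥ (MSA *ᵥ Y)
      ≤ (MS *ᵥ (Y - XA *ᵥ c)) ⬝ᵥ (MS *ᵥ (Y - XA *ᵥ c)) := by
    intro c
    have hform : MS *ᵥ (Y - XA *ᵥ c)
        = Y - X *ᵥ (Sum.elim (((XSᵀ * XS)⁻¹ * XSᵀ) *ᵥ (Y - XA *ᵥ c)) c) := by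
      rw [hX, fromCols_mulVec_sumElim, hMS, sub_mulVec, one_mulVec,
        Matrix.mul_assoc, ← mulVec_mulVec]
      rw [sub_add_eq_sub_sub, sub_right_comm]
    rw [hform]
    exact aux_min hMSAsym hMSAid hMSAX Y _
  -- expansion of the quadratic
  have expand : ∀ c : Fin a → ℝ, (MS *ᵥ (Y - XA *ᵥ c)) ⬝ᵥ (MS *ᵥ (Y - XA *ᵥ c))
      = u ⬝ᵥ u - 2 * (z ⬝ᵥ c) + c ⬝ᵥ ((XAᵀ * MS * XA) *ᵥ c) := by
    intro c
    set w : Fin n → ℝ := MS *ᵥ (XA *ᵥ c) with hw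
    have hsplit : MS *ᵥ (Y - XA *ᵥ c) = u - w := by rw [mulVec_sub]
    have huw : u ⬝ᵥ w = z ⬝ᵥ c := by
      rw [hw, dotProduct_mulVec, ← mulVec_transpose, hMSsym, hMSu, dotProduct_mulVec,
        ← mulVec_transpose, hz]
    have hwu : w ⬝ᵥ u = z ⬝ᵥ c := by rw [dotProduct_comm, huw]
    have hww : w ⬝ᵥ w = c ⬝ᵥ ((XAᵀ * MS * XA) *ᵥ c) := by
      rw [hw, aux_proj_dot hMSsym hMSid, Matrix.mul_assoc, ← mulVec_mulVec,
        dotProduct_mulVec (v := c), ← mulVec_transpose, transpose_transpose, mulVec_mulVec]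
    rw [hsplit, dotProduct_sub, sub_dotProduct, sub_dotProduct, huw, hwu, hww]
    ring
  -- sum is z ⬝ᵥ z
  have hsum : (∑ i : Fin a, ((XAᵀ *ᵥ (MS *ᵥ Y)) i) ^ 2) = z ⬝ᵥ z := by
    rw [dotProduct]
    exact Finset.sum_congr rfl fun i _ => sq (z i)
  have hzz : 0 ≤ z ⬝ᵥ z := aux_dot_self_nonneg z
  -- base bound: RHS ≥ 0
  have hbase : (MSA *ᵥ Y) ⬝ᵥ (MSA *ᵥ Y) ≤ u ⬝ᵥ u := by
    have h := key 0
    rw [expand 0] at h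
    simpa using h
  rcases le_or_gt t 0 with htle | htpos
  · have : (∑ i : Fin a, ((XAᵀ *ᵥ (MS *ᵥ Y)) i) ^ 2) / t ≤ 0 :=
      div_nonpos_of_nonneg_of_nonpos (by rw [hsum]; exact hzz) htle
    linarith
  · have hc := key (t⁻¹ • z)
    rw [expand (t⁻¹ • z)] at hc
    have hzc : z ⬝ᵥ (t⁻¹ • z) = t⁻¹ * (z ⬝ᵥ z) := by rw [dotProduct_smul]; rfl
    have hBz : (t⁻¹ • z) ⬝ᵥ ((XAᵀ * MS * XA) *ᵥ (t⁻¹ • z))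
        = t⁻¹ * (t⁻¹ * (z ⬝ᵥ ((XAᵀ * MS * XA) *ᵥ z))) := by
      rw [mulVec_smul, smul_dotProduct, dotProduct_smul]; rfl
    have hray : z ⬝ᵥ ((XAᵀ * MS * XA) *ᵥ z) ≤ t * (z ⬝ᵥ z) := aux_rayleigh hB z
    rw [hzc, hBz] at hc
    have htinv : 0 < t⁻¹ := inv_pos.mpr htpos
    have hb2 : t⁻¹ * (t⁻¹ * (z ⬝ᵥ ((XAᵀ * MS * XA) *ᵥ z))) ≤ t⁻¹ * (z ⬝ᵥ z) := by
      have h1 : t⁻¹ * (z ⬝ᵥ ((XAᵀ * MS * XA) *ᵥ z)) ≤ t⁻¹ * (t * (z ⬝ᵥ z)) :=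
        mul_le_mul_of_nonneg_left hray (le_of_lt htinv)
      have h2 : t⁻¹ * (t * (z ⬝ᵥ z)) = z ⬝ᵥ z := by
        field_simp
      have h3 := mul_le_mul_of_nonneg_left h1 (le_of_lt htinv)
      rw [h2] at h3
      exact h3
    rw [hsum, div_eq_inv_mul]
    linarith
end

section
/- Let [X_S, X_T] ∈ ℝ^{n×(s+t)} have full column rank, let M_S = I - X_S(X_S^T X_S)^{-1}X_S^T, and let β ∈ ℝ^t. Then ||M_S X_T β||² ≥ λ_min(X_{S∪T}^T X_{S∪T}) · ||β||², where X_{S∪T} = [X_S, X_T] and λ_min denotes the smallest eigenvalue. -/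
open Matrix

/-! Writing `G = (X_Sᵀ X_S)⁻¹ X_Sᵀ X_T`, one has `M_S X_T β = X v` for `X = [X_S, X_T]` and
`v = (-G β, β)`. Hence `‖M_S X_T β‖² = vᵀ (XᵀX) v ≥ λ_min ‖v‖² ≥ λ_min ‖β‖²`, the last step
because `λ_min ≥ 0` for the Gram matrix `XᵀX`. -/

section Rayleigh

variable {m : Type*} [Fintype m] [DecidableEq m] {A : Matrix m m ℝ}

lemma Matrix.IsHermitian.dotProduct_mulVec_eq_sum_eigenvalues (hA : A.IsHermitian)
    (v : m → ℝ) :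
    v ⬝ᵥ (A *ᵥ v) =
      ∑ i, hA.eigenvalues i * ((v ᵥ* (hA.eigenvectorUnitary : Matrix m m ℝ)) i) ^ 2 := by
  set U : Matrix m m ℝ := (hA.eigenvectorUnitary : Matrix m m ℝ)
  have hstar : star U *ᵥ v = v ᵥ* U := by
    rw [star_eq_conjTranspose, conjTranspose_eq_transpose_of_trivial, mulVec_transpose]
  conv_lhs => rw [hA.spectral_theorem, Unitary.conjStarAlgAut_apply]
  rw [← mulVec_mulVec, ← mulVec_mulVec, dotProduct_mulVec, hstar]
  simp only [dotProduct, mulVec_diagonal, Function.comp_apply, RCLike.ofReal_real_eq_id, id_eq]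
  exact Finset.sum_congr rfl fun i _ => by ring

lemma Matrix.IsHermitian.vecMul_eigenvectorUnitary_dotProduct_self (hA : A.IsHermitian)
    (v : m → ℝ) :
    (v ᵥ* (hA.eigenvectorUnitary : Matrix m m ℝ)) ⬝ᵥ (v ᵥ* (hA.eigenvectorUnitary : Matrix m m ℝ)) =
      v ⬝ᵥ v := by
  set U : Matrix m m ℝ := (hA.eigenvectorUnitary : Matrix m m ℝ)
  have hUU : U * Uᵀ = 1 := by
    simpa [star_eq_conjTranspose, conjTranspose_eq_transpose_of_trivial] using
      Unitary.coe_mul_star_self hA.eigenvectorUnitary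
  rw [← dotProduct_mulVec, ← mulVec_transpose, mulVec_mulVec, hUU, one_mulVec]

lemma Matrix.IsHermitian.iInf_eigenvalues_mul_dotProduct_le (hA : A.IsHermitian) (v : m → ℝ) :
    (⨅ i, hA.eigenvalues i) * (v ⬝ᵥ v) ≤ v ⬝ᵥ (A *ᵥ v) := by
  rw [hA.dotProduct_mulVec_eq_sum_eigenvalues, ← hA.vecMul_eigenvectorUnitary_dotProduct_self,
    dotProduct, Finset.mul_sum]
  refine Finset.sum_le_sum fun i _ => ?_
  rw [← sq]
  exact mul_le_mul_of_nonneg_right (ciInf_le (Set.finite_range _).bddBelow i) (sq_nonneg _)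

end Rayleigh

lemma Matrix.iInf_eigenvalues_mul_dotProduct_le_mulVec_dotProduct {m k : Type*} [Fintype m]
    [Fintype k] [DecidableEq k] (X : Matrix m k ℝ) (hX : (Xᵀ * X).IsHermitian) (v : k → ℝ) :
    (⨅ i, hX.eigenvalues i) * (v ⬝ᵥ v) ≤ (X *ᵥ v) ⬝ᵥ (X *ᵥ v) := by
  have := hX.iInf_eigenvalues_mul_dotProduct_le v
  rwa [← mulVec_mulVec, dotProduct_mulVec, vecMul_transpose] at this

lemma Matrix.iInf_eigenvalues_transpose_mul_self_nonneg {m k : Type*} [Fintype m] [Fintype k]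
    [DecidableEq k] (X : Matrix m k ℝ) (hX : (Xᵀ * X).IsHermitian) :
    0 ≤ ⨅ i, hX.eigenvalues i := by
  refine Real.iInf_nonneg fun i => ?_
  simpa [conjTranspose_eq_transpose_of_trivial] using eigenvalues_conjTranspose_mul_self_nonneg X i

lemma dotProduct_self_le_sumElim_dotProduct_self {ι κ : Type*} [Fintype ι] [Fintype κ]
    (u : ι → ℝ) (w : κ → ℝ) : w ⬝ᵥ w ≤ Sum.elim u w ⬝ᵥ Sum.elim u w := by
  rw [sumElim_dotProduct_sumElim]
  exact le_add_of_nonneg_left (Finset.sum_nonneg fun i _ => mul_self_nonneg (u i))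

lemma one_sub_mul_mulVec_eq_fromCols_mulVec {l m k R : Type*} [Fintype l] [Fintype m] [Fintype k]
    [DecidableEq l] [CommRing R] (XS : Matrix l m R) (XT : Matrix l k R) (B : Matrix m l R)
    (β : k → R) :
    (1 - XS * B) *ᵥ (XT *ᵥ β) = fromCols XS XT *ᵥ Sum.elim (-((B * XT) *ᵥ β)) β := by
  rw [fromCols_mulVec_sumElim, sub_mulVec, one_mulVec, mulVec_neg, mulVec_mulVec,
    mulVec_mulVec, Matrix.mul_assoc]
  abel

theorem stmt_4_general {n s t : ℕ} (XS : Matrix (Fin n) (Fin s) ℝ) (XT : Matrix (Fin n) (Fin t) ℝ)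
    (β : Fin t → ℝ)
    (MS : Matrix (Fin n) (Fin n) ℝ) (hMS : MS = 1 - XS * (XSᵀ * XS)⁻¹ * XSᵀ)
    (hG : ((fromCols XS XT)ᵀ * fromCols XS XT).IsHermitian) :
    (⨅ i, hG.eigenvalues i) * (β ⬝ᵥ β) ≤ (MS *ᵥ (XT *ᵥ β)) ⬝ᵥ (MS *ᵥ (XT *ᵥ β)) := by
  set v := Sum.elim (-(((XSᵀ * XS)⁻¹ * XSᵀ * XT) *ᵥ β)) β
  have hMSv : MS *ᵥ (XT *ᵥ β) = fromCols XS XT *ᵥ v := by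
    rw [hMS, Matrix.mul_assoc XS, one_sub_mul_mulVec_eq_fromCols_mulVec]
  calc (⨅ i, hG.eigenvalues i) * (β ⬝ᵥ β)
      ≤ (⨅ i, hG.eigenvalues i) * (v ⬝ᵥ v) :=
        mul_le_mul_of_nonneg_left (dotProduct_self_le_sumElim_dotProduct_self _ β)
          (iInf_eigenvalues_transpose_mul_self_nonneg _ hG)
    _ ≤ (MS *ᵥ (XT *ᵥ β)) ⬝ᵥ (MS *ᵥ (XT *ᵥ β)) := by
        rw [hMSv]
        exact iInf_eigenvalues_mul_dotProduct_le_mulVec_dotProduct _ hG v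

/-- `‖M_S X_T β‖² ≥ λ_min(X_{S∪T}ᵀ X_{S∪T}) · ‖β‖²`. -/
theorem stmt_4 {n s t : ℕ} (XS : Matrix (Fin n) (Fin s) ℝ) (XT : Matrix (Fin n) (Fin t) ℝ)
    (β : Fin t → ℝ)
    (hS : IsUnit (XSᵀ * XS).det)
    (hfull : IsUnit ((fromCols XS XT)ᵀ * fromCols XS XT).det)
    (MS : Matrix (Fin n) (Fin n) ℝ) (hMS : MS = 1 - XS * (XSᵀ * XS)⁻¹ * XSᵀ)
    (hG : ((fromCols XS XT)ᵀ * fromCols XS XT).IsHermitian) :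
    (⨅ i, hG.eigenvalues i) * (β ⬝ᵥ β) ≤ (MS *ᵥ (XT *ᵥ β)) ⬝ᵥ (MS *ᵥ (XT *ᵥ β)) :=
  stmt_4_general XS XT β MS hMS hG
end

section
/- Let [X_S, X_T] ∈ ℝ^{n×(s+t)} have full column rank with t ≥ 1, let M_S be the orthogonal projection onto the complement of the column space of X_S, and let β ∈ ℝ^t with all entries satisfying |β_j| ≥ β_min > 0. Then max_{1≤i≤t} (X_i^T M_S X_T β)² ≥ λ_min(X_{S∪T}^T X_{S∪T})² · β_min², where X_i denotes the i-th column of X_T. -/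
/-!
Write `u = X_T β` and `v = X_Tᵀ M_S u`. Since `M_S` is a symmetric idempotent,
`β ⬝ v = ‖M_S u‖²`, and `M_S u = u - X_S (X_Sᵀ X_S)⁻¹ X_Sᵀ u` is `X_{S∪T} w` for a vector `w` whose
`T`-block is `β`. The Rayleigh bound for the Gram matrix gives `β ⬝ v ≥ λ_min ‖w‖² ≥ λ_min ‖β‖²`.
If every `|v_i|` were below `λ_min β_min`, then termwise `β_j v_j < λ_min β_min |β_j| ≤ λ_min β_j²`,
contradicting this bound.
-/

open Matrix

namespace Matrix

section Rayleigh

variable {m : Type*} [Fintype m] [DecidableEq m]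

theorem IsHermitian.iInf_eigenvalues_mul_dotProduct_self_le {A : Matrix m m ℝ}
    (hA : A.IsHermitian) (x : m → ℝ) :
    (⨅ i, hA.eigenvalues i) * (x ⬝ᵥ x) ≤ x ⬝ᵥ (A *ᵥ x) := by
  set U : Matrix m m ℝ := (hA.eigenvectorUnitary : Matrix m m ℝ) with hU
  set y : m → ℝ := Uᵀ *ᵥ x with hy
  have hstar : star U = Uᵀ := by
    ext i j
    simp [star_apply]
  have hUUt : U * Uᵀ = 1 := hstar ▸ Matrix.mem_unitaryGroup_iff.mp hA.eigenvectorUnitary.2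
  have hnorm : x ⬝ᵥ x = y ⬝ᵥ y := by
    rw [hy, mulVec_transpose, ← dotProduct_mulVec, ← mulVec_transpose, mulVec_mulVec, hUUt,
      one_mulVec]
  have hquad : x ⬝ᵥ (A *ᵥ x) = ∑ i, hA.eigenvalues i * (y i * y i) := by
    conv_lhs => rw [hA.spectral_theorem, Unitary.conjStarAlgAut_apply]
    rw [hstar, ← hU, ← mulVec_mulVec, ← mulVec_mulVec, dotProduct_mulVec, ← mulVec_transpose,
      ← hy]
    simp only [dotProduct, mulVec_diagonal]
    refine Finset.sum_congr rfl fun i _ => ?_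
    simp only [Function.comp_apply, RCLike.ofReal_real_eq_id, id_eq]
    ring
  rw [hquad, hnorm, dotProduct, Finset.mul_sum]
  exact Finset.sum_le_sum fun i _ => mul_le_mul_of_nonneg_right
    (ciInf_le (Finite.bddBelow_range _) i) (mul_self_nonneg _)

theorem iInf_eigenvalues_transpose_mul_self_nonneg_s5 {n : Type*} [Fintype n] (A : Matrix n m ℝ)
    (hA : (Aᵀ * A).IsHermitian) : 0 ≤ ⨅ i, hA.eigenvalues i :=
  Real.iInf_nonneg fun i => by
    simpa using eigenvalues_conjTranspose_mul_self_nonneg A i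

end Rayleigh

section ResidualMaker

variable {n s t : Type*} [Fintype n] [Fintype s] [Fintype t] [DecidableEq n] [DecidableEq s]

/-- The paper's `M_S` for `X = X_S`. It is the orthogonal projection onto the complement of the
column space of `X` only when `Xᵀ X` is invertible; otherwise the junk inverse `0` makes it `1`. -/
noncomputable def residualMaker (X : Matrix n s ℝ) : Matrix n n ℝ :=
  1 - X * (Xᵀ * X)⁻¹ * Xᵀ

theorem transpose_residualMaker (X : Matrix n s ℝ) : (residualMaker X)ᵀ = residualMaker X := by
  simp only [residualMaker, transpose_sub, transpose_one, transpose_mul, transpose_transpose,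
    transpose_nonsing_inv, Matrix.mul_assoc]

theorem residualMaker_mul_self {X : Matrix n s ℝ} (hX : IsUnit (Xᵀ * X).det) :
    residualMaker X * residualMaker X = residualMaker X := by
  have hproj : X * (Xᵀ * X)⁻¹ * Xᵀ * (X * (Xᵀ * X)⁻¹ * Xᵀ) = X * (Xᵀ * X)⁻¹ * Xᵀ := by
    calc X * (Xᵀ * X)⁻¹ * Xᵀ * (X * (Xᵀ * X)⁻¹ * Xᵀ)
        = X * ((Xᵀ * X)⁻¹ * (Xᵀ * X) * ((Xᵀ * X)⁻¹ * Xᵀ)) := by simp only [Matrix.mul_assoc]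
      _ = X * (Xᵀ * X)⁻¹ * Xᵀ := by rw [nonsing_inv_mul _ hX, Matrix.one_mul, Matrix.mul_assoc]
  rw [residualMaker, Matrix.sub_mul, Matrix.mul_sub, Matrix.mul_sub, hproj, Matrix.one_mul,
    Matrix.mul_one, Matrix.one_mul, sub_self, sub_zero]

theorem dotProduct_residualMaker_mulVec {X : Matrix n s ℝ} (hX : IsUnit (Xᵀ * X).det)
    (u : n → ℝ) :
    u ⬝ᵥ (residualMaker X *ᵥ u) = (residualMaker X *ᵥ u) ⬝ᵥ (residualMaker X *ᵥ u) := by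
  conv_rhs => rw [dotProduct_mulVec, ← mulVec_transpose, transpose_residualMaker, mulVec_mulVec,
    residualMaker_mul_self hX, dotProduct_comm]

theorem residualMaker_mulVec_eq_fromCols_mulVec (X : Matrix n s ℝ) (Y : Matrix n t ℝ)
    (β : t → ℝ) :
    residualMaker X *ᵥ (Y *ᵥ β) =
      fromCols X Y *ᵥ Sum.elim (-(((Xᵀ * X)⁻¹ * Xᵀ) *ᵥ (Y *ᵥ β))) β := by
  rw [fromCols_mulVec_sumElim, residualMaker]
  generalize Y *ᵥ β = u
  simp only [sub_mulVec, one_mulVec, mulVec_neg, mulVec_mulVec, Matrix.mul_assoc]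
  abel

theorem iInf_eigenvalues_mul_dotProduct_self_le_dotProduct_residualMaker [DecidableEq t]
    {X : Matrix n s ℝ} (hX : IsUnit (Xᵀ * X).det) (Y : Matrix n t ℝ)
    (hG : ((fromCols X Y)ᵀ * fromCols X Y).IsHermitian) (β : t → ℝ) :
    (⨅ i, hG.eigenvalues i) * (β ⬝ᵥ β) ≤ β ⬝ᵥ (Yᵀ *ᵥ (residualMaker X *ᵥ (Y *ᵥ β))) := by
  set w : s ⊕ t → ℝ := Sum.elim (-(((Xᵀ * X)⁻¹ * Xᵀ) *ᵥ (Y *ᵥ β))) β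
  have hβw : β ⬝ᵥ β ≤ w ⬝ᵥ w := by
    simp only [w, dotProduct, Fintype.sum_sum_type, Sum.elim_inl, Sum.elim_inr]
    exact le_add_of_nonneg_left (Finset.sum_nonneg fun i _ => mul_self_nonneg _)
  calc (⨅ i, hG.eigenvalues i) * (β ⬝ᵥ β)
      ≤ (⨅ i, hG.eigenvalues i) * (w ⬝ᵥ w) :=
        mul_le_mul_of_nonneg_left hβw (iInf_eigenvalues_transpose_mul_self_nonneg_s5 _ hG)
    _ ≤ w ⬝ᵥ (((fromCols X Y)ᵀ * fromCols X Y) *ᵥ w) := hG.iInf_eigenvalues_mul_dotProduct_self_le w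
    _ = (fromCols X Y *ᵥ w) ⬝ᵥ (fromCols X Y *ᵥ w) := by
        rw [← mulVec_mulVec, dotProduct_mulVec, ← mulVec_transpose, transpose_transpose]
    _ = (Y *ᵥ β) ⬝ᵥ (residualMaker X *ᵥ (Y *ᵥ β)) := by
        rw [← residualMaker_mulVec_eq_fromCols_mulVec, dotProduct_residualMaker_mulVec hX]
    _ = β ⬝ᵥ (Yᵀ *ᵥ (residualMaker X *ᵥ (Y *ᵥ β))) := by
        rw [dotProduct_mulVec β, vecMul_transpose]

end ResidualMaker

end Matrix

theorem exists_mul_le_abs_of_mul_dotProduct_self_le {ι : Type*} [Fintype ι] [Nonempty ι]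
    {β v : ι → ℝ} {c b : ℝ} (hc : 0 ≤ c) (hb : 0 < b) (hβ : ∀ j, b ≤ |β j|)
    (h : c * (β ⬝ᵥ β) ≤ β ⬝ᵥ v) : ∃ i, c * b ≤ |v i| := by
  by_contra! hv
  refine (h.trans_lt ?_).false
  rw [dotProduct, dotProduct, Finset.mul_sum]
  refine Finset.sum_lt_sum_of_nonempty Finset.univ_nonempty fun j _ => ?_
  calc β j * v j ≤ |β j| * |v j| := abs_mul (β j) (v j) ▸ le_abs_self _
    _ < |β j| * (c * b) := mul_lt_mul_of_pos_left (hv j) (hb.trans_le (hβ j))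
    _ ≤ c * (β j * β j) := by
        rw [← abs_mul_abs_self (β j)]
        nlinarith [mul_nonneg (mul_nonneg hc (abs_nonneg (β j))) (sub_nonneg.2 (hβ j))]

theorem stmt_5_general {n s t : ℕ} (ht : 0 < t)
    (XS : Matrix (Fin n) (Fin s) ℝ) (XT : Matrix (Fin n) (Fin t) ℝ)
    (β : Fin t → ℝ) (βmin : ℝ) (hβmin : 0 < βmin)
    (hβ : ∀ j, βmin ≤ |β j|)
    (hS : IsUnit (XSᵀ * XS).det)
    (MS : Matrix (Fin n) (Fin n) ℝ) (hMS : MS = 1 - XS * (XSᵀ * XS)⁻¹ * XSᵀ)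
    (hG : ((fromCols XS XT)ᵀ * fromCols XS XT).IsHermitian) :
    (⨅ i, hG.eigenvalues i) ^ 2 * βmin ^ 2
      ≤ ⨆ i : Fin t, ((XT.transpose *ᵥ (MS *ᵥ (XT *ᵥ β))) i) ^ 2 := by
  have : Nonempty (Fin t) := ⟨⟨0, ht⟩⟩
  have hlam := iInf_eigenvalues_transpose_mul_self_nonneg_s5 _ hG
  obtain ⟨i, hi⟩ := exists_mul_le_abs_of_mul_dotProduct_self_le hlam hβmin hβ
    (iInf_eigenvalues_mul_dotProduct_self_le_dotProduct_residualMaker hS XT hG β)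
  calc (⨅ i, hG.eigenvalues i) ^ 2 * βmin ^ 2 = ((⨅ i, hG.eigenvalues i) * βmin) ^ 2 := by ring
    _ ≤ ((XTᵀ *ᵥ (MS *ᵥ (XT *ᵥ β))) i) ^ 2 := by
        rw [← sq_abs ((XTᵀ *ᵥ (MS *ᵥ (XT *ᵥ β))) i), hMS]
        exact pow_le_pow_left₀ (mul_nonneg hlam hβmin.le) hi 2
    _ ≤ ⨆ i : Fin t, ((XTᵀ *ᵥ (MS *ᵥ (XT *ᵥ β))) i) ^ 2 :=
        le_ciSup (f := fun i => ((XTᵀ *ᵥ (MS *ᵥ (XT *ᵥ β))) i) ^ 2) (Finite.bddAbove_range _) i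

/-- `max_i (X_iᵀ M_S X_T β)² ≥ λ_min(X_{S∪T}ᵀ X_{S∪T})² · β_min²`. -/
theorem stmt_5 {n s t : ℕ} (ht : 0 < t)
    (XS : Matrix (Fin n) (Fin s) ℝ) (XT : Matrix (Fin n) (Fin t) ℝ)
    (β : Fin t → ℝ) (βmin : ℝ) (hβmin : 0 < βmin)
    (hβ : ∀ j, βmin ≤ |β j|)
    (hS : IsUnit (XSᵀ * XS).det)
    (hfull : IsUnit ((fromCols XS XT)ᵀ * fromCols XS XT).det)
    (MS : Matrix (Fin n) (Fin n) ℝ) (hMS : MS = 1 - XS * (XSᵀ * XS)⁻¹ * XSᵀ)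
    (hG : ((fromCols XS XT)ᵀ * fromCols XS XT).IsHermitian) :
    (⨅ i, hG.eigenvalues i) ^ 2 * βmin ^ 2
      ≤ ⨆ i : Fin t, ((XT.transpose *ᵥ (MS *ᵥ (XT *ᵥ β))) i) ^ 2 :=
  stmt_5_general ht XS XT β βmin hβmin hβ hS MS hMS hG
end

section
/- Let [X_S, X_T] ∈ ℝ^{n×(s+t)} have full column rank, M_S = I - X_S(X_S^T X_S)^{-1}X_S^T, β ∈ ℝ^t with min_j |β_j| = β_min > 0, ε ∈ ℝ^n, and Y = X_T β + ε' where M_S Y = M_S X_T β + M_S ε. Then max_{1≤i≤t} (X_i^T M_S Y)² ≥ (β_min²/2) · λ_min(X_{S∪T}^T X_{S∪T})² − max_{1≤i≤t}(X_i^T X_i) · max_{1≤i≤t} (X_i^T M_S ε / ||M_S X_i||)². -/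
open Matrix

lemma rayleigh_lower {m : Type*} [Fintype m] [DecidableEq m] {G : Matrix m m ℝ}
    (hG : G.IsHermitian) (c : ℝ) (hc : ∀ i, c ≤ hG.eigenvalues i) (w : m → ℝ) :
    c * (w ⬝ᵥ w) ≤ w ⬝ᵥ (G *ᵥ w) := by
  set U : Matrix m m ℝ := (hG.eigenvectorUnitary : Matrix m m ℝ) with hUdef
  have hU : U * star U = 1 := (Matrix.mem_unitaryGroup_iff).mp hG.eigenvectorUnitary.2
  have hstar : star U = Uᵀ := by
    ext i j; simp [Matrix.star_eq_conjTranspose, Matrix.conjTranspose_apply]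
  set y : m → ℝ := Uᵀ *ᵥ w with hy
  have hyv : y = w ᵥ* U := by rw [hy, Matrix.mulVec_transpose]
  have hyy : y ⬝ᵥ y = w ⬝ᵥ w := by
    rw [hyv, ← Matrix.dotProduct_mulVec, ← hyv, hy, Matrix.mulVec_mulVec, ← hstar, hU,
      Matrix.one_mulVec]
  have hquad : w ⬝ᵥ (G *ᵥ w) = y ⬝ᵥ ((Matrix.diagonal hG.eigenvalues) *ᵥ y) := by
    conv_lhs => rw [hG.spectral_theorem]
    rw [Unitary.conjStarAlgAut_apply, ← hUdef, hstar]
    have : RCLike.ofReal ∘ hG.eigenvalues = hG.eigenvalues := by ext i; simp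
    rw [this, Matrix.mul_assoc, ← Matrix.mulVec_mulVec, ← Matrix.mulVec_mulVec,
      Matrix.dotProduct_mulVec, ← hyv, ← hy]
  rw [hquad, ← hyy]
  simp only [dotProduct, Matrix.mulVec_diagonal, Finset.mul_sum]
  apply Finset.sum_le_sum
  intro i _
  have := mul_le_mul_of_nonneg_right (hc i) (sq_nonneg (y i))
  nlinarith [sq_nonneg (y i)]

lemma quad_form_eq {m k : Type*} [Fintype m] [Fintype k] (C : Matrix m k ℝ) (w : k → ℝ) :
    w ⬝ᵥ ((Cᵀ * C) *ᵥ w) = (C *ᵥ w) ⬝ᵥ (C *ᵥ w) := by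
  rw [← Matrix.mulVec_mulVec, Matrix.dotProduct_mulVec, Matrix.vecMul_transpose]


/-- Proposition 3: `max_i (X_iᵀ M_S Y)² ≥ (β_min²/2) λ_min(X_{S∪T}ᵀX_{S∪T})²
  − max_i (X_iᵀ X_i) · max_i (X_iᵀ M_S ε / ‖M_S X_i‖)²`. -/
theorem stmt_6 {n s t : ℕ} (ht : 0 < t)
    (XS : Matrix (Fin n) (Fin s) ℝ) (XT : Matrix (Fin n) (Fin t) ℝ)
    (β : Fin t → ℝ) (βmin : ℝ) (hβmin : 0 < βmin)
    (hβ : ∀ j, βmin ≤ |β j|)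
    (Y ε : Fin n → ℝ)
    (hS : IsUnit (XSᵀ * XS).det)
    (hfull : IsUnit ((fromCols XS XT)ᵀ * fromCols XS XT).det)
    (MS : Matrix (Fin n) (Fin n) ℝ) (hMS : MS = 1 - XS * (XSᵀ * XS)⁻¹ * XSᵀ)
    (hY : MS *ᵥ Y = MS *ᵥ (XT *ᵥ β) + MS *ᵥ ε)
    (hG : ((fromCols XS XT)ᵀ * fromCols XS XT).IsHermitian) :
    (βmin ^ 2 / 2) * (⨅ i, hG.eigenvalues i) ^ 2
      - (⨆ i : Fin t, (XTᵀ i) ⬝ᵥ (XTᵀ i))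
        * (⨆ i : Fin t, ((XTᵀ i) ⬝ᵥ (MS *ᵥ ε)
            / Real.sqrt ((MS *ᵥ (XTᵀ i)) ⬝ᵥ (MS *ᵥ (XTᵀ i)))) ^ 2)
      ≤ ⨆ i : Fin t, ((XTᵀ i) ⬝ᵥ (MS *ᵥ Y)) ^ 2 := by
  haveI : Nonempty (Fin t) := Fin.pos_iff_nonempty.mp ht
  -- basic properties of MS
  have hSsym : (XSᵀ * XS)ᵀ = XSᵀ * XS := by
    rw [Matrix.transpose_mul, Matrix.transpose_transpose]
  have hinvsym : ((XSᵀ * XS)⁻¹)ᵀ = (XSᵀ * XS)⁻¹ := by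
    rw [Matrix.transpose_nonsing_inv, hSsym]
  have hMSsym : MSᵀ = MS := by
    rw [hMS, Matrix.transpose_sub, Matrix.transpose_one, Matrix.transpose_mul,
      Matrix.transpose_mul, Matrix.transpose_transpose, hinvsym, Matrix.mul_assoc]
  have hPP : (XS * (XSᵀ * XS)⁻¹ * XSᵀ) * (XS * (XSᵀ * XS)⁻¹ * XSᵀ)
      = XS * (XSᵀ * XS)⁻¹ * XSᵀ := by
    rw [show (XS * (XSᵀ * XS)⁻¹ * XSᵀ) * (XS * (XSᵀ * XS)⁻¹ * XSᵀ)
        = XS * ((XSᵀ * XS)⁻¹ * (XSᵀ * XS) * ((XSᵀ * XS)⁻¹ * XSᵀ)) by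
      simp only [Matrix.mul_assoc]]
    rw [Matrix.nonsing_inv_mul _ hS, Matrix.one_mul, Matrix.mul_assoc]
  have hMSidem : MS * MS = MS := by
    rw [hMS, Matrix.sub_mul, Matrix.one_mul, Matrix.mul_sub, Matrix.mul_one, hPP]
    abel
  have hsym : ∀ (v u : Fin n → ℝ), v ⬝ᵥ (MS *ᵥ u) = (MS *ᵥ v) ⬝ᵥ u := by
    intro v u
    rw [Matrix.dotProduct_mulVec, ← Matrix.mulVec_transpose, hMSsym]
  have hidem : ∀ (v : Fin n → ℝ), MS *ᵥ (MS *ᵥ v) = MS *ᵥ v := by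
    intro v; rw [Matrix.mulVec_mulVec, hMSidem]
  -- abbreviations matching the goal
  set a : Fin t → ℝ := fun i => (XTᵀ i) ⬝ᵥ (MS *ᵥ (XT *ᵥ β)) with ha
  set b : Fin t → ℝ := fun i => (XTᵀ i) ⬝ᵥ (MS *ᵥ ε) with hb
  set cterm : Fin t → ℝ := fun i => ((XTᵀ i) ⬝ᵥ (MS *ᵥ ε)
      / Real.sqrt ((MS *ᵥ (XTᵀ i)) ⬝ᵥ (MS *ᵥ (XTᵀ i)))) ^ 2 with hcterm
  set xx : Fin t → ℝ := fun i => (XTᵀ i) ⬝ᵥ (XTᵀ i) with hxx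
  set lam : ℝ := ⨅ i, hG.eigenvalues i with hlam
  -- positive semidefiniteness of the Gram matrix
  have hPSD : ((fromCols XS XT)ᵀ * fromCols XS XT).PosSemidef := by
    have h := Matrix.posSemidef_conjTranspose_mul_self (fromCols XS XT)
    have e : (fromCols XS XT)ᴴ = (fromCols XS XT)ᵀ := by
      ext i j; simp [Matrix.conjTranspose_apply]
    rwa [e] at h
  have hlam0 : 0 ≤ lam := le_ciInf fun i => hPSD.eigenvalues_nonneg i
  -- Step A: some coordinate of a is large
  set cvec : Fin s → ℝ := (XSᵀ * XS)⁻¹ *ᵥ (XSᵀ *ᵥ (XT *ᵥ β)) with hcvec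
  set w : Fin s ⊕ Fin t → ℝ := Sum.elim (-cvec) β with hw
  set z : Fin n → ℝ := MS *ᵥ (XT *ᵥ β) with hz
  have hzw : z = fromCols XS XT *ᵥ w := by
    rw [hw, Matrix.fromCols_mulVec_sumElim, hz, hMS, Matrix.sub_mulVec,
      Matrix.one_mulVec, ← Matrix.mulVec_mulVec, ← Matrix.mulVec_mulVec, ← hcvec,
      Matrix.mulVec_neg]
    abel
  have hzz : z ⬝ᵥ z = w ⬝ᵥ (((fromCols XS XT)ᵀ * fromCols XS XT) *ᵥ w) := by
    rw [hzw]
    exact (quad_form_eq (fromCols XS XT) w).symm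
  have hquad : lam * (w ⬝ᵥ w) ≤ z ⬝ᵥ z := by
    rw [hzz]
    exact rayleigh_lower hG lam
      (fun i => ciInf_le (Set.finite_range _).bddBelow i) w
  have hww : β ⬝ᵥ β ≤ w ⬝ᵥ w := by
    have hsplit : w ⬝ᵥ w = cvec ⬝ᵥ cvec + β ⬝ᵥ β := by
      simp [hw, dotProduct, Fintype.sum_sum_type]
    have : (0:ℝ) ≤ cvec ⬝ᵥ cvec := Finset.sum_nonneg fun i _ => mul_self_nonneg _
    linarith
  have hza : z ⬝ᵥ z = ∑ i, β i * a i := by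
    have h1 : z ⬝ᵥ z = (XT *ᵥ β) ⬝ᵥ z := by
      conv_lhs => rw [hz, ← hsym (XT *ᵥ β) z]
      rw [hz, hidem]
    rw [h1, dotProduct_comm, Matrix.dotProduct_mulVec, ← Matrix.mulVec_transpose,
      dotProduct_comm]
    simp [dotProduct, Matrix.mulVec, ha]
  obtain ⟨i0, -, hi0⟩ := Finset.exists_max_image Finset.univ (fun i => |a i|)
    ⟨Classical.arbitrary _, Finset.mem_univ _⟩
  have hSpos : 0 < ∑ i, |β i| :=
    Finset.sum_pos (fun i _ => lt_of_lt_of_le hβmin (hβ i)) Finset.univ_nonempty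
  have hstepA : lam * βmin ≤ |a i0| := by
    have h1 : βmin * (∑ i, |β i|) ≤ β ⬝ᵥ β := by
      rw [Finset.mul_sum]
      apply Finset.sum_le_sum
      intro i _
      have h := hβ i
      have : βmin * |β i| ≤ |β i| * |β i| :=
        mul_le_mul_of_nonneg_right h (abs_nonneg _)
      calc βmin * |β i| ≤ |β i| * |β i| := this
        _ = β i * β i := abs_mul_abs_self _
    have h2 : (∑ i, β i * a i) ≤ (∑ i, |β i|) * |a i0| := by
      rw [Finset.sum_mul]
      apply Finset.sum_le_sum
      intro i _
      calc β i * a i ≤ |β i * a i| := le_abs_self _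
        _ = |β i| * |a i| := abs_mul _ _
        _ ≤ |β i| * |a i0| := mul_le_mul_of_nonneg_left (hi0 i (Finset.mem_univ i)) (abs_nonneg _)
    have h3 : lam * (βmin * (∑ i, |β i|)) ≤ lam * (β ⬝ᵥ β) :=
      mul_le_mul_of_nonneg_left h1 hlam0
    have h4 : lam * (β ⬝ᵥ β) ≤ lam * (w ⬝ᵥ w) := mul_le_mul_of_nonneg_left hww hlam0
    have h5 : lam * (βmin * (∑ i, |β i|)) ≤ (∑ i, |β i|) * |a i0| := by
      calc lam * (βmin * (∑ i, |β i|)) ≤ lam * (w ⬝ᵥ w) := le_trans h3 h4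
        _ ≤ z ⬝ᵥ z := hquad
        _ = ∑ i, β i * a i := hza
        _ ≤ (∑ i, |β i|) * |a i0| := h2
    have := (mul_le_mul_iff_left₀ hSpos).mp (by linarith [h5] :
      (lam * βmin) * (∑ i, |β i|) ≤ |a i0| * (∑ i, |β i|))
    exact this
  have hstepA2 : βmin ^ 2 * lam ^ 2 ≤ a i0 ^ 2 := by
    have h0 : 0 ≤ lam * βmin := mul_nonneg hlam0 hβmin.le
    nlinarith [sq_abs (a i0), abs_nonneg (a i0)]
  -- Step B: bound on b i
  have hxxnn : ∀ i, 0 ≤ xx i := fun i => Finset.sum_nonneg fun j _ => mul_self_nonneg _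
  have hB : ∀ i, b i ^ 2 ≤ xx i * cterm i := by
    intro i
    set v : Fin n → ℝ := XTᵀ i with hv
    set q : ℝ := (MS *ᵥ v) ⬝ᵥ (MS *ᵥ v) with hq
    have hqnn : 0 ≤ q := Finset.sum_nonneg fun j _ => mul_self_nonneg _
    have hcteq : cterm i = (b i / Real.sqrt q) ^ 2 := rfl
    by_cases h0 : q = 0
    · have hMv : MS *ᵥ v = 0 := dotProduct_self_eq_zero.mp h0
      have hbz : b i = 0 := by
        show v ⬝ᵥ (MS *ᵥ ε) = 0
        rw [hsym, hMv, zero_dotProduct]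
      rw [hbz]
      simpa using mul_nonneg (hxxnn i) (sq_nonneg (b i / Real.sqrt q))
    · have hqpos : 0 < q := lt_of_le_of_ne hqnn (Ne.symm h0)
      have hsq : Real.sqrt q ^ 2 = q := Real.sq_sqrt hqnn
      have hct : cterm i = b i ^ 2 / q := by rw [hcteq, div_pow, hsq]
      have hqmid : q = v ⬝ᵥ (MS *ᵥ v) := by
        rw [hq, ← hsym, hidem]
      have hqle : q ≤ xx i := by
        set u : Fin n → ℝ := v - MS *ᵥ v with hu
        have hMu : MS *ᵥ u = 0 := by
          rw [hu, Matrix.mulVec_sub, hidem, sub_self]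
        have h1 : (MS *ᵥ v) ⬝ᵥ u = 0 := by
          rw [← hsym v u, hMu, dotProduct_zero]
        have h2 : v ⬝ᵥ v - v ⬝ᵥ (MS *ᵥ v) = v ⬝ᵥ u := by
          rw [hu, dotProduct_sub]
        have h3 : v ⬝ᵥ u = (MS *ᵥ v) ⬝ᵥ u + u ⬝ᵥ u := by
          rw [← add_dotProduct, hu]
          congr 1
          abel
        have h4 : 0 ≤ u ⬝ᵥ u := Finset.sum_nonneg fun j _ => mul_self_nonneg _
        have hxxv : xx i = v ⬝ᵥ v := rfl
        rw [hxxv, hqmid]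
        linarith
      rw [hct]
      have hbq : b i ^ 2 = q * (b i ^ 2 / q) := by field_simp
      calc b i ^ 2 = q * (b i ^ 2 / q) := hbq
        _ ≤ xx i * (b i ^ 2 / q) :=
          mul_le_mul_of_nonneg_right hqle (by positivity)
  have hbdd1 : BddAbove (Set.range xx) := (Set.finite_range _).bddAbove
  have hbdd2 : BddAbove (Set.range cterm) := (Set.finite_range _).bddAbove
  have hsupXnn : 0 ≤ ⨆ i, xx i :=
    le_trans (hxxnn (Classical.arbitrary _)) (le_ciSup hbdd1 _)
  have hstepB : b i0 ^ 2 ≤ (⨆ i, xx i) * (⨆ i, cterm i) := by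
    calc b i0 ^ 2 ≤ xx i0 * cterm i0 := hB i0
      _ ≤ (⨆ i, xx i) * cterm i0 :=
        mul_le_mul_of_nonneg_right (le_ciSup hbdd1 i0) (sq_nonneg _)
      _ ≤ (⨆ i, xx i) * (⨆ i, cterm i) :=
        mul_le_mul_of_nonneg_left (le_ciSup hbdd2 i0) hsupXnn
  -- final assembly
  have hYi : ∀ i, (XTᵀ i) ⬝ᵥ (MS *ᵥ Y) = a i + b i := by
    intro i
    rw [hY, dotProduct_add]
  have hfinal : (a i0 + b i0) ^ 2 ≤ ⨆ i, ((XTᵀ i) ⬝ᵥ (MS *ᵥ Y)) ^ 2 := by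
    have : ((XTᵀ i0) ⬝ᵥ (MS *ᵥ Y)) ^ 2 = (a i0 + b i0) ^ 2 := by rw [hYi i0]
    rw [← this]
    exact le_ciSup (f := fun i => ((XTᵀ i) ⬝ᵥ (MS *ᵥ Y)) ^ 2)
      ((Set.finite_range _).bddAbove) i0
  have key : βmin ^ 2 / 2 * lam ^ 2 - (⨆ i, xx i) * (⨆ i, cterm i) ≤ (a i0 + b i0) ^ 2 := by
    nlinarith [hstepA2, hstepB, sq_nonneg (a i0 + 2 * b i0)]
  exact le_trans key hfinal
end
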